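/- Kreweras complementation is a lattice anti-isomorphism on NC(n): for noncrossing partitions P, Q of [n], P refines Q if and only if κ(Q) refines κ(P). -/

import Mathlib

/-!
A partition `R` of the second copy makes `Q ∪ R` noncrossing iff both are noncrossing and no arc
of `Q` separates two points of one block of `R`. The points of the second copy lying under the
same arcs of `Q` (the faces cut out by `Q`) form a noncrossing partition, which is therefore
`κ(Q)`. As every arc of `P ≤ Q` is an arc of `Q`, `κ` is antitone. Conversely, if `i < j` lie in
one block of `P` but not of `Q`, let `m` be the first element `≥ i` of the block of `j` and `p`
the cyclic predecessor of `m` in that block: then `(m-1)'` and `p'` lie in one face of `Q`, but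
on different sides of the arc `(i, j)` of `P`, so `κ(Q) ≰ κ(P)`.
-/

/-- A partition of `{1,…,n}` (as `Fin n`) is noncrossing if there are no
`a < b < c < d` with `a, c` in one block and `b, d` in a different block. -/
def IsNoncrossing {n : ℕ} (P : Finpartition (Finset.univ : Finset (Fin n))) : Prop :=
  ¬ ∃ a b c d : Fin n, a < b ∧ b < c ∧ c < d ∧
    P.part a = P.part c ∧ P.part b = P.part d ∧ P.part a ≠ P.part b

/-- The set `NC(n)` of noncrossing partitions of `{1,…,n}`. -/
abbrev NCP (n : ℕ) := {P : Finpartition (Finset.univ : Finset (Fin n)) // IsNoncrossing P}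

/-- In the interleaved order `1 < 1' < 2 < 2' < … < n < n'` (element `i` of the
first copy sits at position `2i`, of the second copy at position `2i+1`),
positions `x` and `y` lie in the same block of the union `P ∪ Q`, where `P`
lives on the first copy and `Q` on the second. -/
def JointSame {n : ℕ} (P Q : Finpartition (Finset.univ : Finset (Fin n))) (x y : ℕ) : Prop :=
  ∃ i j : Fin n,
    (x = 2 * i.val ∧ y = 2 * j.val ∧ P.part i = P.part j) ∨
    (x = 2 * i.val + 1 ∧ y = 2 * j.val + 1 ∧ Q.part i = Q.part j)

/-- `P ∪ Q` is a noncrossing partition of the interleaved totally ordered set. -/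
def JointNoncrossing {n : ℕ} (P Q : Finpartition (Finset.univ : Finset (Fin n))) : Prop :=
  ¬ ∃ a b c d : ℕ, a < b ∧ b < c ∧ c < d ∧
    JointSame P Q a c ∧ JointSame P Q b d ∧ ¬ JointSame P Q a b

/-- `k` is the Kreweras complementation map on `NC(n)`: `k P` is the coarsest
noncrossing partition on the second copy of `{1,…,n}` such that `P ∪ k P` is
noncrossing on the interleaved set. -/
def IsKreweras {n : ℕ} (k : NCP n → NCP n) : Prop :=
  ∀ P : NCP n, JointNoncrossing P.1 (k P).1 ∧
    ∀ Q : NCP n, JointNoncrossing P.1 Q.1 → Q.1 ≤ (k P).1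

open Finset

namespace Finpartition

variable {α : Type*} [DecidableEq α] [Fintype α] {P Q : Finpartition (univ : Finset α)}

theorem part_eq_part_of_le (h : P ≤ Q) {a b : α} (hab : P.part a = P.part b) :
    Q.part a = Q.part b := by
  obtain ⟨t, ht, hsub⟩ := h (P.part_mem.2 (mem_univ a))
  rw [Q.part_eq_of_mem ht (hsub (P.mem_part (mem_univ a))),
    Q.part_eq_of_mem ht (hsub (hab ▸ P.mem_part (mem_univ b)))]

theorem le_of_forall_part_eq_imp (h : ∀ a b, P.part a = P.part b → Q.part a = Q.part b) :
    P ≤ Q := by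
  intro t ht
  obtain ⟨a, -, rfl⟩ := P.part_surjOn ht
  refine ⟨Q.part a, Q.part_mem.2 (mem_univ a), fun b hb => ?_⟩
  have hba : P.part b = P.part a := (P.mem_part_iff_part_eq_part (mem_univ b) (mem_univ a)).1 hb
  rw [← h b a hba]
  exact Q.mem_part (mem_univ b)

theorem le_iff_forall_part_eq_imp :
    P ≤ Q ↔ ∀ a b, P.part a = P.part b → Q.part a = Q.part b :=
  ⟨fun h _ _ => part_eq_part_of_le h, le_of_forall_part_eq_imp⟩

end Finpartition

namespace IsNoncrossing

variable {n : ℕ} {P : Finpartition (univ : Finset (Fin n))}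

theorem part_eq_of_crossing (hP : IsNoncrossing P) {a b c d : Fin n}
    (hab : a < b) (hbc : b < c) (hcd : c < d)
    (hac : P.part a = P.part c) (hbd : P.part b = P.part d) : P.part a = P.part b :=
  of_not_not fun hne => hP ⟨a, b, c, d, hab, hbc, hcd, hac, hbd, hne⟩

end IsNoncrossing

namespace Kreweras

variable {n : ℕ} {P Q : Finpartition (univ : Finset (Fin n))}

section JointSame

variable {a b : Fin n} {x y : ℕ}

theorem jointSame_even_iff : JointSame P Q (2 * a) (2 * b) ↔ P.part a = P.part b := by
  refine ⟨?_, fun h => ⟨a, b, .inl ⟨rfl, rfl, h⟩⟩⟩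
  rintro ⟨i, j, ⟨hi, hj, h⟩ | ⟨hi, hj, -⟩⟩
  · obtain rfl : i = a := by omega
    obtain rfl : j = b := by omega
    exact h
  · omega

theorem jointSame_odd_iff : JointSame P Q (2 * a + 1) (2 * b + 1) ↔ Q.part a = Q.part b := by
  refine ⟨?_, fun h => ⟨a, b, .inr ⟨rfl, rfl, h⟩⟩⟩
  rintro ⟨i, j, ⟨hi, hj, -⟩ | ⟨hi, hj, h⟩⟩
  · omega
  · obtain rfl : i = a := by omega
    obtain rfl : j = b := by omega
    exact h

theorem not_jointSame_of_mod_two_ne (h : x % 2 ≠ y % 2) : ¬ JointSame P Q x y := by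
  rintro ⟨i, j, ⟨rfl, rfl, -⟩ | ⟨rfl, rfl, -⟩⟩ <;> omega

end JointSame

/-- `a'` and `b'` lie under the same arcs of `Q`, where `a'` (position `2a+1` of the interleaved
order) lies under the arc `u < v` iff `u ≤ a < v`. -/
def SameFace (Q : Finpartition (univ : Finset (Fin n))) (a b : Fin n) : Prop :=
  ∀ u v : Fin n, u < v → Q.part u = Q.part v → (u ≤ a ∧ a < v ↔ u ≤ b ∧ b < v)

theorem SameFace.symm {a b : Fin n} (h : SameFace Q a b) : SameFace Q b a :=
  fun u v huv hQ => (h u v huv hQ).symm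

theorem SameFace.of_le (h : P ≤ Q) {a b : Fin n} (hab : SameFace Q a b) : SameFace P a b :=
  fun u v huv hP => hab u v huv (Finpartition.part_eq_part_of_le h hP)

theorem SameFace.of_crossing {a b c d : Fin n} (hab : a < b) (hbc : b < c) (hcd : c < d)
    (hac : SameFace Q a c) (hbd : SameFace Q b d) : SameFace Q a b := by
  intro u v huv hQ
  have := hac u v huv hQ
  have := hbd u v huv hQ
  omega

def faceSetoid (Q : Finpartition (univ : Finset (Fin n))) : Setoid (Fin n) where
  r := SameFace Q
  iseqv := ⟨fun _ _ _ _ _ => Iff.rfl, SameFace.symm,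
    fun h₁ h₂ u v huv hQ => (h₁ u v huv hQ).trans (h₂ u v huv hQ)⟩

open Classical in
noncomputable def kreweras (Q : Finpartition (univ : Finset (Fin n))) :
    Finpartition (univ : Finset (Fin n)) :=
  Finpartition.ofSetoid (faceSetoid Q)

theorem kreweras_part_eq_iff {a b : Fin n} :
    (kreweras Q).part a = (kreweras Q).part b ↔ SameFace Q a b := by
  classical
  rw [eq_comm, ← (kreweras Q).mem_part_iff_part_eq_part (mem_univ b) (mem_univ a)]
  exact Finpartition.mem_part_ofSetoid_iff_rel

theorem le_kreweras_iff : P ≤ kreweras Q ↔ ∀ a b, P.part a = P.part b → SameFace Q a b := by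
  simp only [Finpartition.le_iff_forall_part_eq_imp, kreweras_part_eq_iff]

theorem kreweras_antitone : Antitone (kreweras (n := n)) := fun _ _ h =>
  le_kreweras_iff.2 fun _ _ hab => (kreweras_part_eq_iff.1 hab).of_le h

theorem isNoncrossing_kreweras (Q : Finpartition (univ : Finset (Fin n))) :
    IsNoncrossing (kreweras Q) := by
  rintro ⟨a, b, c, d, hab, hbc, hcd, hac, hbd, hne⟩
  rw [kreweras_part_eq_iff] at hac hbd
  exact hne (kreweras_part_eq_iff.2 (.of_crossing hab hbc hcd hac hbd))

section Faces

variable (hQ : IsNoncrossing Q) {g m p : Fin n}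
include hQ

theorem sameFace_of_prev_in_block (hg : g.val + 1 = m.val) (hpm : p < m)
    (hp : Q.part p = Q.part m) (hprev : ∀ w, p < w → w < m → Q.part w ≠ Q.part m) :
    SameFace Q p g := by
  intro u v huv hQuv
  have left : ¬ (u ≤ p ∧ p < v ∧ v ≤ g) := by
    rintro ⟨hup, hpv, hvg⟩
    refine hprev v hpv (by omega) (hQuv.symm.trans ?_)
    rcases hup.lt_or_eq with hup | rfl
    · exact (hQ.part_eq_of_crossing hup hpv (by omega) hQuv hp).trans hp
    · exact hp
  have right : ¬ (p < u ∧ u ≤ g ∧ g < v) := by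
    rintro ⟨hpu, hug, hgv⟩
    refine hprev u hpu (by omega) ?_
    rcases (by omega : m ≤ v).lt_or_eq with hmv | rfl
    · exact (hQ.part_eq_of_crossing hpu (by omega) hmv hp hQuv).symm.trans hp
    · exact hQuv
  omega

theorem sameFace_of_first_in_block {M : Fin n} (hg : g.val + 1 = m.val) (hmM : m ≤ M)
    (hM : Q.part M = Q.part m) (hfirst : ∀ w < m, Q.part w ≠ Q.part m)
    (hlast : ∀ w, M < w → Q.part w ≠ Q.part m) : SameFace Q g M := by
  intro u v huv hQuv
  have left : ¬ (u ≤ g ∧ m ≤ v ∧ v ≤ M) := by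
    rintro ⟨hug, hmv, hvM⟩
    refine hfirst u (by omega) ?_
    rcases hmv.lt_or_eq with hmv | rfl
    · rcases hvM.lt_or_eq with hvM | rfl
      · exact hQ.part_eq_of_crossing (by omega) hmv hvM hQuv hM.symm
      · exact hQuv.trans hM
    · exact hQuv
  have right : ¬ (m ≤ u ∧ u ≤ M ∧ M < v) := by
    rintro ⟨hmu, huM, hMv⟩
    refine hlast v hMv (hQuv.symm.trans ?_)
    rcases hmu.lt_or_eq with hmu | rfl
    · rcases huM.lt_or_eq with huM | rfl
      · exact (hQ.part_eq_of_crossing hmu huM hMv hM.symm hQuv).symm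
      · exact hM
    · rfl
  omega

end Faces

theorem sameFace_of_jointNoncrossing (h : JointNoncrossing P Q) {a b : Fin n}
    (hab : Q.part a = Q.part b) : SameFace P a b := by
  suffices under : ∀ a b, Q.part a = Q.part b → ∀ u v : Fin n, P.part u = P.part v →
      u ≤ a → a < v → u ≤ b ∧ b < v from
    fun u v _ hP => ⟨fun ⟨hu, hv⟩ => under a b hab u v hP hu hv,
      fun ⟨hu, hv⟩ => under b a hab.symm u v hP hu hv⟩
  intro a b hab u v hP hua hav
  by_contra hb
  rcases (by omega : b < u ∨ v ≤ b) with hbu | hvb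
  · exact h ⟨2 * b + 1, 2 * u, 2 * a + 1, 2 * v, by omega, by omega, by omega,
      jointSame_odd_iff.2 hab.symm, jointSame_even_iff.2 hP, not_jointSame_of_mod_two_ne (by omega)⟩
  · exact h ⟨2 * u, 2 * a + 1, 2 * v, 2 * b + 1, by omega, by omega, by omega,
      jointSame_even_iff.2 hP, jointSame_odd_iff.2 hab, not_jointSame_of_mod_two_ne (by omega)⟩

theorem jointNoncrossing_iff :
    JointNoncrossing P Q ↔ IsNoncrossing P ∧ IsNoncrossing Q ∧ Q ≤ kreweras P := by
  refine ⟨fun h => ⟨?_, ?_, le_kreweras_iff.2 fun _ _ => sameFace_of_jointNoncrossing h⟩, ?_⟩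
  · rintro ⟨a, b, c, d, hab, hbc, hcd, hac, hbd, hne⟩
    exact h ⟨2 * a, 2 * b, 2 * c, 2 * d, by omega, by omega, by omega, jointSame_even_iff.2 hac,
      jointSame_even_iff.2 hbd, jointSame_even_iff.not.2 hne⟩
  · rintro ⟨a, b, c, d, hab, hbc, hcd, hac, hbd, hne⟩
    exact h ⟨2 * a + 1, 2 * b + 1, 2 * c + 1, 2 * d + 1, by omega, by omega, by omega,
      jointSame_odd_iff.2 hac, jointSame_odd_iff.2 hbd, jointSame_odd_iff.not.2 hne⟩
  rintro ⟨hP, hQ, hle⟩ ⟨x, y, z, w, hxy, hyz, hzw, hxz, hyw, hxy'⟩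
  rw [le_kreweras_iff] at hle
  rcases hxz with ⟨a, c, ⟨rfl, rfl, hac⟩ | ⟨rfl, rfl, hac⟩⟩ <;>
    rcases hyw with ⟨b, d, ⟨rfl, rfl, hbd⟩ | ⟨rfl, rfl, hbd⟩⟩
  · exact hxy' (jointSame_even_iff.2 (hP.part_eq_of_crossing (by omega) (by omega) (by omega)
      hac hbd))
  · have := hle b d hbd a c (by omega) hac
    omega
  · have := hle a c hac b d (by omega) hbd
    omega
  · exact hxy' (jointSame_odd_iff.2 (hQ.part_eq_of_crossing (by omega) (by omega) (by omega)
      hac hbd))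

theorem exists_sameFace_of_part_ne (hQ : IsNoncrossing Q) {i j : Fin n} (hij : i < j)
    (hne : Q.part i ≠ Q.part j) :
    ∃ a b, i ≤ a ∧ a < j ∧ (b < i ∨ j ≤ b) ∧ SameFace Q a b := by
  classical
  obtain ⟨m, hm, hmin⟩ := ({w | i ≤ w ∧ Q.part w = Q.part j} : Finset (Fin n)).exists_min_image
    id ⟨j, by simp [hij.le]⟩
  simp only [mem_filter, mem_univ, true_and, id, and_imp] at hm hmin
  obtain ⟨him, hmj⟩ : i < m ∧ m ≤ j :=
    ⟨hm.1.lt_of_ne fun h => hne (h ▸ hm.2), hmin j hij.le rfl⟩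
  obtain ⟨g, hg⟩ : ∃ g : Fin n, g.val + 1 = m.val := ⟨⟨m - 1, by omega⟩, by simp; omega⟩
  by_cases hprev : ∃ w < m, Q.part w = Q.part m
  · obtain ⟨p, hp, hpmax⟩ := ({w | w < m ∧ Q.part w = Q.part m} : Finset (Fin n)).exists_max_image
      id (by simpa [Finset.filter_nonempty_iff] using hprev)
    simp only [mem_filter, mem_univ, true_and, id, and_imp] at hp hpmax
    have hpi : p < i := lt_of_not_ge fun hip => (hmin p hip (hp.2.trans hm.2)).not_gt hp.1
    refine ⟨g, p, by omega, by omega, .inl hpi, SameFace.symm ?_⟩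
    exact sameFace_of_prev_in_block hQ hg hp.1 hp.2 fun w hpw hwm hw =>
      (hpmax w hwm hw).not_gt hpw
  · push Not at hprev
    obtain ⟨M, hM, hMmax⟩ := ({w | Q.part w = Q.part m} : Finset (Fin n)).exists_max_image
      id ⟨m, by simp⟩
    simp only [mem_filter, mem_univ, true_and, id] at hM hMmax
    have hjM : j ≤ M := hMmax j hm.2.symm
    refine ⟨g, M, by omega, by omega, .inr hjM, ?_⟩
    exact sameFace_of_first_in_block hQ hg (hmj.trans hjM) hM hprev
      fun w hMw hw => (hMmax w hw).not_gt hMw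

theorem le_of_kreweras_le (hQ : IsNoncrossing Q) (h : kreweras Q ≤ kreweras P) : P ≤ Q := by
  have key : ∀ i j, i < j → P.part i = P.part j → Q.part i = Q.part j := by
    intro i j hij hP
    by_contra hne
    obtain ⟨a, b, hia, haj, hb, hab⟩ := exists_sameFace_of_part_ne hQ hij hne
    have := le_kreweras_iff.1 h a b (kreweras_part_eq_iff.2 hab) i j hij hP
    omega
  refine Finpartition.le_of_forall_part_eq_imp fun i j hP => ?_
  rcases lt_trichotomy i j with hij | rfl | hji
  · exact key i j hij hP
  · rfl
  · exact (key j i hji hP.symm).symm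

theorem IsKreweras.val_eq {k : NCP n → NCP n} (hk : IsKreweras k) (P : NCP n) :
    (k P).1 = kreweras P.1 :=
  le_antisymm (jointNoncrossing_iff.1 (hk P).1).2.2
    ((hk P).2 ⟨kreweras P.1, isNoncrossing_kreweras _⟩
      (jointNoncrossing_iff.2 ⟨P.2, isNoncrossing_kreweras _, le_rfl⟩))

end Kreweras

open Kreweras

/-- Kreweras complementation is a lattice anti-isomorphism on `NC(n)`:
`P` refines `Q` iff `κ(Q)` refines `κ(P)`. -/
theorem kreweras_anti_isomorphism (n : ℕ) (k : NCP n → NCP n)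
    (hk : IsKreweras k) (P Q : NCP n) :
    P.1 ≤ Q.1 ↔ (k Q).1 ≤ (k P).1 := by
  rw [hk.val_eq, hk.val_eq]
  exact ⟨fun h => kreweras_antitone h, le_of_kreweras_le Q.2⟩
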